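/- arXiv:1709.05797 — 5 statements merged into one kernel-verified Lean document; each statement's English description precedes it below -/
import Mathlib

section
/- The distinguishing number of the 3-dimensional cube graph Q_3 equals 3. -/
/-- A coloring `c` of the vertices of `G` is distinguishing if the only
color-preserving automorphism of `G` is the identity. -/
def SimpleGraph.IsDistinguishing {V α : Type*} (G : SimpleGraph V) (c : V → α) : Prop :=
  ∀ φ : G ≃g G, (∀ v, c (φ v) = c v) → ∀ v, φ v = v

/-- The distinguishing number of a graph: the least `k` such that some
`k`-coloring of the vertices is preserved only by the identity automorphism. -/
noncomputable def SimpleGraph.distinguishingNumber {V : Type*} (G : SimpleGraph V) : ℕ :=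
  sInf {k : ℕ | ∃ c : V → Fin k, G.IsDistinguishing c}

/-- The 3-dimensional cube graph: vertices are binary strings of length 3,
edges between strings differing in exactly one coordinate. -/
def cubeQ3 : SimpleGraph (Fin 3 → Bool) :=
  SimpleGraph.fromRel (fun u v => (Finset.univ.filter fun i => u i ≠ v i).card = 1)

instance : DecidableRel cubeQ3.Adj := fun u v =>
  decidable_of_iff (u ≠ v ∧ ((Finset.univ.filter fun i => u i ≠ v i).card = 1 ∨
      (Finset.univ.filter fun i => v i ≠ u i).card = 1))
    (by rw [cubeQ3]
        exact (SimpleGraph.fromRel_adj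
          (fun u v => (Finset.univ.filter fun i => u i ≠ v i).card = 1) u v).symm)

/-- The signed-permutation automorphisms of the cube, as permutations of vertices. -/
def gmap (σ : Equiv.Perm (Fin 3)) (a : Fin 3 → Bool) : Equiv.Perm (Fin 3 → Bool) where
  toFun v := fun i => xor (v (σ i)) (a i)
  invFun w := fun j => xor (w (σ.symm j)) (a (σ.symm j))
  left_inv v := by
    funext j
    simp [Equiv.apply_symm_apply, Bool.xor_assoc]
  right_inv w := by
    funext j
    simp [Equiv.apply_symm_apply, Bool.xor_assoc]

theorem hamming (σ : Equiv.Perm (Fin 3)) (x y : Fin 3 → Bool) :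
    (Finset.univ.filter fun i => x (σ i) ≠ y (σ i)).card
      = (Finset.univ.filter fun i => x i ≠ y i).card :=
  Finset.card_equiv σ (by simp)

theorem gmap_ne (σ : Equiv.Perm (Fin 3)) (a : Fin 3 → Bool) (x y : Fin 3 → Bool) (i : Fin 3) :
    (gmap σ a x i ≠ gmap σ a y i) ↔ (x (σ i) ≠ y (σ i)) := by
  show (xor (x (σ i)) (a i) ≠ xor (y (σ i)) (a i)) ↔ _
  cases a i <;> cases x (σ i) <;> cases y (σ i) <;> simp

theorem hamming' (σ : Equiv.Perm (Fin 3)) (a : Fin 3 → Bool) (x y : Fin 3 → Bool) :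
    (Finset.univ.filter fun i => gmap σ a x i ≠ gmap σ a y i).card
      = (Finset.univ.filter fun i => x i ≠ y i).card := by
  rw [Finset.filter_congr (fun i _ => gmap_ne σ a x y i)]
  exact hamming σ x y

/-- `gmap σ a` is a graph automorphism of the cube. -/
theorem autAdj (σ : Equiv.Perm (Fin 3)) (a : Fin 3 → Bool) (u v : Fin 3 → Bool) :
    cubeQ3.Adj (gmap σ a u) (gmap σ a v) ↔ cubeQ3.Adj u v := by
  rw [cubeQ3, SimpleGraph.fromRel_adj, SimpleGraph.fromRel_adj]
  exact and_congr (gmap σ a).injective.ne_iff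
    (or_congr (by rw [hamming' σ a u v]) (by rw [hamming' σ a v u]))

def enc (v : Fin 3 → Bool) : Fin 8 :=
  ⟨(cond (v 0) 1 0) + (cond (v 1) 2 0) + (cond (v 2) 4 0), by
    cases v 0 <;> cases v 1 <;> cases v 2 <;> simp⟩

def dec (n : Fin 8) : Fin 3 → Bool := ![n.val.testBit 0, n.val.testBit 1, n.val.testBit 2]

theorem dec_enc : ∀ v, dec (enc v) = v := by decide

set_option maxRecDepth 1000000 in
theorem lb8 : ∀ c : Fin 8 → Fin 2, ∃ (σ : Equiv.Perm (Fin 3)) (a : Fin 3 → Bool),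
    (∀ v, c (enc (gmap σ a v)) = c (enc v)) ∧ ∃ v, gmap σ a v ≠ v := by decide

/-- Every 2-coloring of the cube admits a nontrivial color-preserving automorphism. -/
theorem lb (c : (Fin 3 → Bool) → Fin 2) : ∃ (σ : Equiv.Perm (Fin 3)) (a : Fin 3 → Bool),
    (∀ v, c (gmap σ a v) = c v) ∧ ∃ v, gmap σ a v ≠ v := by
  obtain ⟨σ, a, h1, h2⟩ := lb8 (fun n => c (dec n))
  refine ⟨σ, a, fun v => ?_, h2⟩
  have := h1 v
  rwa [dec_enc, dec_enc] at this

/-- An explicit distinguishing 3-coloring of the cube. -/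
def cGood (v : Fin 3 → Bool) : Fin 3 :=
  if v = ![false, false, false] then 2
  else if v = ![true, false, false] ∨ v = ![true, true, false] then 1
  else 0

theorem ub : cubeQ3.IsDistinguishing cGood := by
  intro φ h
  have adj : ∀ u v : Fin 3 → Bool, cubeQ3.Adj u v → cubeQ3.Adj (φ u) (φ v) :=
    fun u v huv => φ.map_rel_iff.mpr huv
  have inj : Function.Injective φ := φ.injective
  -- name vertices
  set v000 : Fin 3 → Bool := ![false, false, false] with hv000
  set v100 : Fin 3 → Bool := ![true, false, false] with hv100
  set v010 : Fin 3 → Bool := ![false, true, false] with hv010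
  set v001 : Fin 3 → Bool := ![false, false, true] with hv001
  set v110 : Fin 3 → Bool := ![true, true, false] with hv110
  set v101 : Fin 3 → Bool := ![true, false, true] with hv101
  set v011 : Fin 3 → Bool := ![false, true, true] with hv011
  set v111 : Fin 3 → Bool := ![true, true, true] with hv111
  have h000 : φ v000 = v000 := by
    have key : ∀ w, cGood w = cGood v000 → w = v000 := by decide
    exact key _ (h v000)
  have h100 : φ v100 = v100 := by
    have ha : cubeQ3.Adj (φ v100) v000 := h000 ▸ adj v100 v000 (by decide)
    have key : ∀ w, cubeQ3.Adj w v000 → cGood w = cGood v100 → w = v100 := by decide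
    exact key _ ha (h v100)
  have h010or : φ v010 = v010 ∨ φ v010 = v001 := by
    have ha : cubeQ3.Adj (φ v010) v000 := h000 ▸ adj v010 v000 (by decide)
    have key : ∀ w, cubeQ3.Adj w v000 → cGood w = cGood v010 → w = v010 ∨ w = v001 := by decide
    exact key _ ha (h v010)
  have h001or : φ v001 = v010 ∨ φ v001 = v001 := by
    have ha : cubeQ3.Adj (φ v001) v000 := h000 ▸ adj v001 v000 (by decide)
    have key : ∀ w, cubeQ3.Adj w v000 → cGood w = cGood v001 → w = v010 ∨ w = v001 := by decide
    exact key _ ha (h v001)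
  have h010 : φ v010 = v010 := by
    rcases h010or with h' | h'
    · exact h'
    · exfalso
      have ha1 : cubeQ3.Adj (φ v110) v100 := h100 ▸ adj v110 v100 (by decide)
      have ha2 : cubeQ3.Adj (φ v110) v001 := h' ▸ adj v110 v010 (by decide)
      have key : ∀ w, cubeQ3.Adj w v100 → cubeQ3.Adj w v001 → cGood w = cGood v110 → False := by
        decide
      exact key _ ha1 ha2 (h v110)
  have h001 : φ v001 = v001 := by
    rcases h001or with h' | h'
    · exact absurd (inj (h'.trans h010.symm)) (by decide)
    · exact h'
  have h110 : φ v110 = v110 := by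
    have ha1 : cubeQ3.Adj (φ v110) v100 := h100 ▸ adj v110 v100 (by decide)
    have ha2 : cubeQ3.Adj (φ v110) v010 := h010 ▸ adj v110 v010 (by decide)
    have key : ∀ w, cubeQ3.Adj w v100 → cubeQ3.Adj w v010 → cGood w = cGood v110 → w = v110 := by
      decide
    exact key _ ha1 ha2 (h v110)
  have h101 : φ v101 = v101 := by
    have ha1 : cubeQ3.Adj (φ v101) v100 := h100 ▸ adj v101 v100 (by decide)
    have ha2 : cubeQ3.Adj (φ v101) v001 := h001 ▸ adj v101 v001 (by decide)
    have key : ∀ w, cubeQ3.Adj w v100 → cubeQ3.Adj w v001 → cGood w = cGood v101 → w = v101 := by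
      decide
    exact key _ ha1 ha2 (h v101)
  have h011 : φ v011 = v011 := by
    have ha1 : cubeQ3.Adj (φ v011) v010 := h010 ▸ adj v011 v010 (by decide)
    have ha2 : cubeQ3.Adj (φ v011) v001 := h001 ▸ adj v011 v001 (by decide)
    have key : ∀ w, cubeQ3.Adj w v010 → cubeQ3.Adj w v001 → cGood w = cGood v011 → w = v011 := by
      decide
    exact key _ ha1 ha2 (h v011)
  have h111 : φ v111 = v111 := by
    have ha1 : cubeQ3.Adj (φ v111) v110 := h110 ▸ adj v111 v110 (by decide)
    have ha2 : cubeQ3.Adj (φ v111) v101 := h101 ▸ adj v111 v101 (by decide)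
    have key : ∀ w, cubeQ3.Adj w v110 → cubeQ3.Adj w v101 → cGood w = cGood v111 → w = v111 := by
      decide
    exact key _ ha1 ha2 (h v111)
  have hcases : ∀ v : Fin 3 → Bool, v = v000 ∨ v = v100 ∨ v = v010 ∨ v = v001 ∨ v = v110 ∨
      v = v101 ∨ v = v011 ∨ v = v111 := by decide
  intro v
  rcases hcases v with rfl | rfl | rfl | rfl | rfl | rfl | rfl | rfl <;> assumption

/-- The distinguishing number of the cube `Q_3` equals 3. -/
theorem distinguishingNumber_Q3 : cubeQ3.distinguishingNumber = 3 := by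
  have h3 : 3 ∈ {k : ℕ | ∃ c : (Fin 3 → Bool) → Fin k, cubeQ3.IsDistinguishing c} := ⟨cGood, ub⟩
  refine le_antisymm (Nat.sInf_le h3) (le_csInf ⟨3, h3⟩ ?_)
  rintro k ⟨c, hc⟩
  by_contra hlt
  push_neg at hlt
  have hk2 : k ≤ 2 := Nat.lt_succ_iff.mp hlt
  have hc2 : cubeQ3.IsDistinguishing (fun v => Fin.castLE hk2 (c v)) := by
    intro φ hφ
    exact hc φ (fun v => Fin.castLE_injective hk2 (hφ v))
  obtain ⟨σ, a, hpres, v, hv⟩ := lb (fun v => Fin.castLE hk2 (c v))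
  exact hv (hc2 ⟨gmap σ a, fun {u w} => autAdj σ a u w⟩ hpres v)
end

section
/- The motion of the Petersen graph equals 6; that is, every non-identity automorphism of the Petersen graph moves at least 6 vertices, and some non-identity automorphism moves exactly 6 vertices. -/
/-- The Petersen graph as the Kneser graph `K(5,2)`. -/
def petersen : SimpleGraph {s : Finset (Fin 5) // s.card = 2} :=
  SimpleGraph.fromRel (fun a b => Disjoint a.1 b.1)

abbrev PV := {s : Finset (Fin 5) // s.card = 2}

def good4 (a b c d : PV) : Bool :=
  !(decide (a ≠ b) && decide (a ≠ c) && decide (a ≠ d) && decide (b ≠ c) && decide (b ≠ d)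
      && decide (c ≠ d)
      && !(decide (Disjoint a.1 b.1)) && !(decide (Disjoint a.1 c.1))
      && !(decide (Disjoint a.1 d.1)) && !(decide (Disjoint b.1 c.1))
      && !(decide (Disjoint b.1 d.1)) && !(decide (Disjoint c.1 d.1)))
  || decide (∃ k : Fin 5, k ∈ a.1 ∧ k ∈ b.1 ∧ k ∈ c.1 ∧ k ∈ d.1)

set_option maxHeartbeats 4000000 in
set_option maxRecDepth 10000 in
theorem allgood4 : ∀ a b c d : PV, good4 a b c d = true := by decide

/-- Any four pairwise distinct, pairwise non-disjoint pairs share a common element. -/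
theorem pet_lemma4 (a b c d : PV)
    (h1 : a ≠ b) (h2 : a ≠ c) (h3 : a ≠ d) (h4 : b ≠ c) (h5 : b ≠ d) (h6 : c ≠ d)
    (g1 : ¬ Disjoint a.1 b.1) (g2 : ¬ Disjoint a.1 c.1) (g3 : ¬ Disjoint a.1 d.1)
    (g4 : ¬ Disjoint b.1 c.1) (g5 : ¬ Disjoint b.1 d.1) (g6 : ¬ Disjoint c.1 d.1) :
    ∃ k : Fin 5, k ∈ a.1 ∧ k ∈ b.1 ∧ k ∈ c.1 ∧ k ∈ d.1 := by
  have h := allgood4 a b c d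
  simp [good4] at h
  tauto

/-- The `k`-th element of `Fin 5` different from `i`. -/
def oth (i : Fin 5) (k : Fin 4) : Fin 5 :=
  if (k : ℕ) < (i : ℕ) then ⟨k, by have := k.2; omega⟩ else ⟨k + 1, by have := k.2; omega⟩

/-- The `k`-th vertex of the star at `i`. -/
def quadv (i : Fin 5) (k : Fin 4) : PV :=
  ⟨{i, oth i k}, by revert i k; decide⟩

set_option maxRecDepth 10000 in
theorem quadv_mem : ∀ (i : Fin 5) (k : Fin 4), i ∈ (quadv i k).1 := by decide

set_option maxRecDepth 10000 in
theorem quadv_ne : ∀ (i : Fin 5) (k k' : Fin 4), k ≠ k' → quadv i k ≠ quadv i k' := by decide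

set_option maxRecDepth 10000 in
theorem quadv_cover : ∀ (i : Fin 5) (v : PV), i ∈ v.1 →
    v = quadv i 0 ∨ v = quadv i 1 ∨ v = quadv i 2 ∨ v = quadv i 3 := by decide

set_option maxRecDepth 10000 in
theorem pet_card7 : ∀ i i' : Fin 5, i ≠ i' →
    (Finset.univ.filter (fun v : PV => i ∈ v.1 ∨ i' ∈ v.1)).card = 7 := by decide

set_option maxRecDepth 10000 in
theorem pet_card4 : ∀ k : Fin 5,
    (Finset.univ.filter (fun v : PV => k ∈ v.1)).card = 4 := by decide

set_option maxHeartbeats 4000000 in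
set_option maxRecDepth 10000 in
theorem permMotion : ∀ σ : Equiv.Perm (Fin 5),
    (∃ v : PV, v.1.image σ ≠ v.1) →
    6 ≤ (Finset.univ.filter (fun v : PV => v.1.image σ ≠ v.1)).card := by decide

set_option maxRecDepth 10000 in
theorem swapMotion :
    (Finset.univ.filter (fun v : PV => v.1.image (Equiv.swap 0 1) ≠ v.1)).card = 6 := by decide

set_option maxRecDepth 10000 in
theorem swap_moves : ∃ v : PV, v.1.image (Equiv.swap 0 1) ≠ v.1 := by decide

/-- The vertex map induced by a permutation of `Fin 5`. -/
def pmap (σ : Equiv.Perm (Fin 5)) (v : PV) : PV :=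
  ⟨v.1.image σ, by rw [Finset.card_image_of_injective _ σ.injective, v.2]⟩

theorem pmap_pmap (σ τ : Equiv.Perm (Fin 5)) (v : PV) :
    pmap σ (pmap τ v) = pmap (σ * τ) v := by
  apply Subtype.ext
  simp [pmap, Finset.image_image, Function.comp_def]

theorem pmap_one (v : PV) : pmap 1 v = v := by
  apply Subtype.ext
  simp [pmap]

/-- The graph automorphism induced by a permutation of `Fin 5`. -/
def permIso (σ : Equiv.Perm (Fin 5)) : petersen ≃g petersen where
  toFun := pmap σ
  invFun := pmap σ⁻¹
  left_inv := fun v => by rw [pmap_pmap, inv_mul_cancel, pmap_one]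
  right_inv := fun v => by rw [pmap_pmap, mul_inv_cancel, pmap_one]
  map_rel_iff' := by
    intro a b
    simp only [petersen, SimpleGraph.fromRel_adj, Equiv.coe_fn_mk]
    constructor
    · rintro ⟨hne, h⟩
      refine ⟨fun h' => hne (by rw [h']), ?_⟩
      rcases h with h | h
      · exact Or.inl ((Finset.disjoint_image σ.injective).1 h)
      · exact Or.inr ((Finset.disjoint_image σ.injective).1 h)
    · rintro ⟨hne, h⟩
      refine ⟨fun h' => hne
        (Subtype.ext (Finset.image_injective σ.injective (congrArg Subtype.val h'))), ?_⟩
      rcases h with h | h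
      · exact Or.inl ((Finset.disjoint_image σ.injective).2 h)
      · exact Or.inr ((Finset.disjoint_image σ.injective).2 h)

theorem not_disjoint_of_mem {s t : Finset (Fin 5)} {k : Fin 5} (hs : k ∈ s) (ht : k ∈ t) :
    ¬ Disjoint s t := fun h => (Finset.disjoint_left.1 h hs) ht

/-- Any automorphism of the Petersen graph is induced by a permutation of `Fin 5`. -/
theorem pet_rigid (φ : petersen ≃g petersen) :
    ∃ σ : Equiv.Perm (Fin 5), ∀ v : PV, (φ v).1 = v.1.image σ := by
  have inj : Function.Injective φ := fun x y h => φ.toEquiv.injective h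
  -- images of nonadjacent distinct vertices are non-disjoint
  have key : ∀ v w : PV, v ≠ w → ¬ Disjoint v.1 w.1 → ¬ Disjoint (φ v).1 (φ w).1 := by
    intro v w hvw hd
    have hadj : ¬ petersen.Adj (φ v) (φ w) := by
      rw [φ.map_adj_iff]
      simp only [petersen, SimpleGraph.fromRel_adj]
      rintro ⟨-, h | h⟩
      · exact hd h
      · exact hd h.symm
    intro hdisj
    apply hadj
    simp only [petersen, SimpleGraph.fromRel_adj]
    exact ⟨fun h => hvw (inj h), Or.inl hdisj⟩
  -- for each i there is k with: every vertex containing i maps to one containing k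
  have stepA : ∀ i : Fin 5, ∃ k : Fin 5, ∀ v : PV, i ∈ v.1 → k ∈ (φ v).1 := by
    intro i
    have hne : ∀ k k' : Fin 4, k ≠ k' → φ (quadv i k) ≠ φ (quadv i k') :=
      fun k k' h h' => quadv_ne i k k' h (inj h')
    have hnd : ∀ k k' : Fin 4, k ≠ k' → ¬ Disjoint (φ (quadv i k)).1 (φ (quadv i k')).1 :=
      fun k k' h => key _ _ (quadv_ne i k k' h)
        (not_disjoint_of_mem (quadv_mem i k) (quadv_mem i k'))
    obtain ⟨k, h0, h1, h2, h3⟩ :=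
      pet_lemma4 (φ (quadv i 0)) (φ (quadv i 1)) (φ (quadv i 2)) (φ (quadv i 3))
        (hne 0 1 (by decide)) (hne 0 2 (by decide)) (hne 0 3 (by decide))
        (hne 1 2 (by decide)) (hne 1 3 (by decide)) (hne 2 3 (by decide))
        (hnd 0 1 (by decide)) (hnd 0 2 (by decide)) (hnd 0 3 (by decide))
        (hnd 1 2 (by decide)) (hnd 1 3 (by decide)) (hnd 2 3 (by decide))
    refine ⟨k, fun v hv => ?_⟩
    rcases quadv_cover i v hv with rfl | rfl | rfl | rfl
    exacts [h0, h1, h2, h3]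
  choose σ hσ using stepA
  -- σ is injective
  have hinj : Function.Injective σ := by
    intro i i' hii'
    by_contra hne
    have hsub : (Finset.univ.filter (fun v : PV => i ∈ v.1 ∨ i' ∈ v.1)).image φ ⊆
        Finset.univ.filter (fun v : PV => σ i ∈ v.1) := by
      intro w hw
      simp only [Finset.mem_image, Finset.mem_filter, Finset.mem_univ, true_and] at hw ⊢
      obtain ⟨v, hv, rfl⟩ := hw
      rcases hv with hv | hv
      · exact hσ i v hv
      · rw [hii']; exact hσ i' v hv
    have h7 := pet_card7 i i' hne
    have h4 := pet_card4 (σ i)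
    have hc := Finset.card_le_card hsub
    rw [Finset.card_image_of_injective _ inj, h7, h4] at hc
    omega
  have hbij : Function.Bijective σ := Finite.injective_iff_bijective.1 hinj
  refine ⟨Equiv.ofBijective σ hbij, fun v => ?_⟩
  obtain ⟨i, j, hij, hv⟩ := Finset.card_eq_two.1 v.2
  have hi : i ∈ v.1 := by rw [hv]; simp
  have hj : j ∈ v.1 := by rw [hv]; simp
  have h1 : σ i ∈ (φ v).1 := hσ i v hi
  have h2 : σ j ∈ (φ v).1 := hσ j v hj
  have hnee : σ i ≠ σ j := fun h => hij (hinj h)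
  have hsub : ({σ i, σ j} : Finset (Fin 5)) ⊆ (φ v).1 := by
    intro x hx
    rcases Finset.mem_insert.1 hx with rfl | hx
    · exact h1
    · rw [Finset.mem_singleton.1 hx]; exact h2
  have heq : ({σ i, σ j} : Finset (Fin 5)) = (φ v).1 := by
    apply Finset.eq_of_subset_of_card_le hsub
    rw [(φ v).2, Finset.card_pair hnee]
  rw [← heq, hv]
  simp [Equiv.ofBijective]

/-- every non-identity automorphism of the Petersen graph moves at
least 6 vertices, and some non-identity automorphism moves exactly 6. -/
theorem motion_petersen :
    (∀ φ : petersen ≃g petersen, (∃ v, φ v ≠ v) → 6 ≤ {v | φ v ≠ v}.ncard) ∧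
    (∃ φ : petersen ≃g petersen, (∃ v, φ v ≠ v) ∧ {v | φ v ≠ v}.ncard = 6) := by
  have main : ∀ (φ : petersen ≃g petersen) (σ : Equiv.Perm (Fin 5)),
      (∀ v : PV, (φ v).1 = v.1.image σ) →
      {v | φ v ≠ v} = ↑(Finset.univ.filter (fun v : PV => v.1.image σ ≠ v.1)) := by
    intro φ σ hφ
    ext v
    simp only [Set.mem_setOf_eq, Finset.coe_filter, Finset.mem_univ, true_and]
    constructor
    · intro h h'
      exact h (Subtype.ext (by rw [hφ v, h']))
    · intro h h'
      exact h (by rw [← hφ v, h'])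
  constructor
  · intro φ hmove
    obtain ⟨σ, hσ⟩ := pet_rigid φ
    rw [main φ σ hσ, Set.ncard_coe_finset]
    apply permMotion
    obtain ⟨v, hv⟩ := hmove
    exact ⟨v, fun h => hv (Subtype.ext (by rw [hσ v, h]))⟩
  · refine ⟨permIso (Equiv.swap 0 1), ?_, ?_⟩
    · obtain ⟨v, hv⟩ := swap_moves
      exact ⟨v, fun h => hv (congrArg Subtype.val h)⟩
    · rw [main (permIso (Equiv.swap 0 1)) (Equiv.swap 0 1) (fun v => rfl),
        Set.ncard_coe_finset, swapMotion]
end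

section
/- (Motion Lemma) Let a finite group A act faithfully on a finite set Ω. If every non-identity element of A moves more than 2·log₂|A| points of Ω, then the action has distinguishing number 2; i.e., there is a 2-coloring of Ω preserved by no non-identity element of A. -/
/-! A coloring fixed by `a` is constant on the orbits of `⟨a⟩`. An orbit that is not a fixed
point has at least two points, so if `a` moves `m` of the `n` points there are at most
`n - m / 2` orbits and at most `2 ^ (n - m / 2)` colorings fixed by `a`. The hypothesis says
`|A| ^ 2 < 2 ^ m`, which turns this into `|A| · 2 ^ (n - m / 2) < 2 ^ n`, so the colorings fixed by
some of the `|A| - 1` non-identity elements cannot exhaust all `2 ^ n` colorings. -/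

open MulAction Subgroup Finset

theorem sq_lt_two_pow_of_two_mul_logb_lt {k m : ℕ} (hk : 0 < k)
    (h : 2 * Real.logb 2 k < m) : k ^ 2 < 2 ^ m := by
  have hk2 : (0 : ℝ) < (k : ℝ) ^ 2 := by positivity
  have hlog : Real.logb 2 ((k : ℝ) ^ 2) = 2 * Real.logb 2 k := by simp [Real.logb_pow]
  rw [← hlog, Real.logb_lt_iff_lt_rpow one_lt_two hk2, Real.rpow_natCast] at h
  exact_mod_cast h

theorem Finset.exists_forall_notMem_of_sum_card_lt {ι α : Type*} [Fintype α]
    (s : Finset ι) (t : ι → Finset α) (h : ∑ i ∈ s, #(t i) < Fintype.card α) :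
    ∃ x, ∀ i ∈ s, x ∉ t i := by
  classical
  by_contra! hcover
  have : (univ : Finset α) ⊆ s.biUnion t := fun x _ => by simpa using hcover x
  exact (card_le_card this |>.trans card_biUnion_le).not_gt (by simpa using h)

theorem Finset.sum_lt_of_forall_card_add_one_mul_le {ι : Type*} (s : Finset ι) (f : ι → ℕ)
    {B : ℕ} (hB : 0 < B) (h : ∀ i ∈ s, (#s + 1) * f i ≤ B) : ∑ i ∈ s, f i < B := by
  refine lt_of_mul_lt_mul_left (a := #s + 1) ?_ (Nat.zero_le _)
  calc (#s + 1) * ∑ i ∈ s, f i ≤ #s * B := by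
        rw [mul_sum]; simpa using sum_le_sum h
    _ < (#s + 1) * B := by nlinarith

section

variable {G Ω β : Type*} [Group G] [MulAction G Ω]

theorem two_mul_card_orbitRel_quotient_le [Finite Ω] :
    2 * Nat.card (orbitRel.Quotient G Ω) ≤ Nat.card Ω + Nat.card (fixedPoints G Ω) := by
  classical
  have := Fintype.ofFinite Ω
  have := Fintype.ofFinite (orbitRel.Quotient G Ω)
  let π : Ω → orbitRel.Quotient G Ω := Quotient.mk''
  -- every orbit has weight at least 2: it is a fixed point or has two points
  let w : Ω → ℕ := fun x => 1 + if x ∈ fixedPoints G Ω then 1 else 0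
  have hw : ∑ x, w x = Nat.card Ω + Nat.card (fixedPoints G Ω) := by
    simp [w, sum_add_distrib, Nat.card_eq_fintype_card, Fintype.card_subtype]
  have hfiber (x : Ω) : 2 ≤ ∑ y with π y = π x, w y := by
    have hmem (g : G) : g • x ∈ ({y | π y = π x} : Finset Ω) := by
      simp [π]
    by_cases hx : x ∈ fixedPoints G Ω
    · calc 2 = w x := by simp only [w, if_pos hx]
        _ ≤ _ := single_le_sum (fun _ _ => Nat.zero_le _) (by simp)
    · obtain ⟨g, hg⟩ : ∃ g : G, g • x ≠ x := by simpa [mem_fixedPoints] using hx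
      calc 2 = ∑ _y ∈ {g • x, x}, 1 := by simp [card_pair hg]
        _ ≤ ∑ y ∈ {g • x, x}, w y := sum_le_sum fun _ _ => Nat.le_add_right 1 _
        _ ≤ _ := sum_le_sum_of_subset (by simp [insert_subset_iff, hmem])
  calc 2 * Nat.card (orbitRel.Quotient G Ω) = ∑ _q : orbitRel.Quotient G Ω, 2 := by
        simp [Nat.card_eq_fintype_card, mul_comm]
    _ ≤ ∑ q : orbitRel.Quotient G Ω, ∑ x with π x = q, w x :=
        sum_le_sum fun q _ => q.inductionOn' hfiber
    _ = _ := by rw [sum_fiberwise, hw]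

theorem orbitRel_zpowers_le_ker {a : G} {c : Ω → β} (hc : ∀ x, c (a • x) = c x) :
    orbitRel (zpowers a) Ω ≤ Setoid.ker c := by
  rintro _ x ⟨⟨g, hg⟩, rfl⟩
  obtain ⟨k, rfl⟩ := mem_zpowers_iff.mp hg
  change c (a ^ k • x) = c x
  clear hg
  induction k using Int.induction_on generalizing x with
  | zero => simp
  | succ k ih => rw [zpow_add_one, mul_smul, ih, hc]
  | pred k ih => rw [zpow_sub_one, mul_smul, ih, ← hc, smul_inv_smul]

def invariantFunEquiv (a : G) :
    {c : Ω → β // ∀ x, c (a • x) = c x} ≃ (orbitRel.Quotient (zpowers a) Ω → β) :=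
  (Equiv.subtypeEquivRight fun _ =>
    ⟨orbitRel_zpowers_le_ker, fun h _ => h ⟨⟨a, mem_zpowers a⟩, rfl⟩⟩).trans
    (Setoid.liftEquiv _)

theorem fixedPoints_zpowers (a : G) : fixedPoints (zpowers a) Ω = fixedBy Ω a := by
  ext x
  simp only [mem_fixedPoints, Subtype.forall, mem_zpowers_iff, forall_exists_index,
    forall_apply_eq_imp_iff, Subgroup.mk_smul]
  exact mem_fixedBy_zpowers_iff_mem_fixedBy

theorem two_mul_card_orbitRel_zpowers_add_ncard_le [Finite Ω] (a : G) :
    2 * Nat.card (orbitRel.Quotient (zpowers a) Ω) + {x : Ω | a • x ≠ x}.ncard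
      ≤ 2 * Nat.card Ω := by
  have horbits := two_mul_card_orbitRel_quotient_le (G := zpowers a) (Ω := Ω)
  have hsplit : (fixedBy Ω a).ncard + {x : Ω | a • x ≠ x}.ncard = Nat.card Ω :=
    Set.ncard_add_ncard_compl _
  rw [fixedPoints_zpowers, Nat.card_coe_set_eq] at horbits
  omega

theorem card_invariantFun (a : G) [Finite Ω] :
    Nat.card {c : Ω → β // ∀ x, c (a • x) = c x} =
      Nat.card β ^ Nat.card (orbitRel.Quotient (zpowers a) Ω) := by
  rw [Nat.card_congr (invariantFunEquiv a), Nat.card_fun]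

theorem mul_card_invariantFun_lt [Finite Ω] [Finite β] [Nonempty β] {a : G} {k : ℕ}
    (hk : k ^ 2 < Nat.card β ^ {x : Ω | a • x ≠ x}.ncard) :
    k * Nat.card {c : Ω → β // ∀ x, c (a • x) = c x} < Nat.card β ^ Nat.card Ω := by
  have : Nonempty {c : Ω → β // ∀ x, c (a • x) = c x} :=
    ⟨⟨fun _ => Classical.arbitrary β, fun _ => rfl⟩⟩
  have hexp := two_mul_card_orbitRel_zpowers_add_ncard_le (Ω := Ω) a
  set N := Nat.card {c : Ω → β // ∀ x, c (a • x) = c x} with hN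
  refine lt_of_pow_lt_pow_left₀ 2 (Nat.zero_le _) ?_
  calc (k * N) ^ 2 = k ^ 2 * N ^ 2 := mul_pow _ _ 2
    _ < Nat.card β ^ {x : Ω | a • x ≠ x}.ncard * N ^ 2 := by
      gcongr
      exact pow_pos Nat.card_pos 2
    _ ≤ (Nat.card β ^ Nat.card Ω) ^ 2 := by
      rw [hN, card_invariantFun, ← pow_mul, ← pow_mul, ← pow_add]
      exact Nat.pow_le_pow_right Nat.card_pos (by omega)

end

theorem motion_lemma_general {A Ω : Type*} [Group A] [Fintype A] [Fintype Ω]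
    [MulAction A Ω]
    (h : ∀ a : A, a ≠ 1 →
      2 * Real.logb 2 (Fintype.card A) < ({x : Ω | a • x ≠ x}.ncard : ℝ)) :
    ∃ c : Ω → Fin 2, ∀ a : A, (∀ x, c (a • x) = c x) → a = 1 := by
  classical
  have hbound (a : A) (ha : a ≠ 1) :
      (#(univ.erase (1 : A)) + 1) * #{c : Ω → Fin 2 | ∀ x, c (a • x) = c x}
        ≤ 2 ^ Fintype.card Ω := by
    have := mul_card_invariantFun_lt (β := Fin 2) (a := a)
      (by simpa using sq_lt_two_pow_of_two_mul_logb_lt Fintype.card_pos (h a ha))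
    simp only [Nat.card_eq_fintype_card, Fintype.card_fin, Fintype.card_subtype] at this
    rw [card_erase_add_one (mem_univ 1), card_univ]
    exact this.le
  have hsum := sum_lt_of_forall_card_add_one_mul_le _ _ (Nat.two_pow_pos _)
    fun a ha => hbound a (ne_of_mem_erase ha)
  rw [show 2 ^ Fintype.card Ω = Fintype.card (Ω → Fin 2) by simp] at hsum
  obtain ⟨c, hc⟩ := exists_forall_notMem_of_sum_card_lt _ _ hsum
  refine ⟨c, fun a ha => ?_⟩
  by_contra ha1
  exact hc a (mem_erase.2 ⟨ha1, mem_univ a⟩) (by simpa using ha)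

/-- Motion Lemma: if a finite group `A` acts faithfully on a finite
set `Ω` and every non-identity element moves more than `2 log₂ |A|` points, then
there is a 2-coloring of `Ω` preserved by no non-identity element of `A`. -/
theorem motion_lemma {A Ω : Type*} [Group A] [Fintype A] [Fintype Ω]
    [MulAction A Ω] [FaithfulSMul A Ω]
    (h : ∀ a : A, a ≠ 1 →
      2 * Real.logb 2 (Fintype.card A) < ({x : Ω | a • x ≠ x}.ncard : ℝ)) :
    ∃ c : Ω → Fin 2, ∀ a : A, (∀ x, c (a • x) = c x) → a = 1 :=
  motion_lemma_general h
end

section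
/- Let T(n,d) be the rooted tree of depth n (n ≥ 1, d ≥ 3) in which the root has degree d, every internal non-root vertex has degree d, and every leaf is at distance exactly n from the root. Then the distinguishing number of T(n,d) equals d. -/
/-!
Every automorphism of `T(n,d)` fixes the root: the leaves below any other vertex `v` are at
distance less than `n` from `v`, whereas all leaves are at distance exactly `n` from the root.
Hence colouring the (at most `d`) children of every vertex injectively gives a distinguishing
`d`-colouring.

Conversely, take a colouring with `k < d` colours and code every vertex by its colour together
with the set of codes of its children. If siblings always had distinct codes, then, going up from
the leaves, each level would carry at most `k` codes: a vertex other than the root has either no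
children or `d - 1 ≥ k` of them, so their codes exhaust the next level and its own code is
determined by its colour. The `d` children of the root then could not have distinct codes. So two siblings share a
code; for such a pair chosen as deep as possible, exchanging their subtrees, matching children by
code, is a nontrivial colour-preserving automorphism.
-/

open Finset Function

theorem Finset.exists_injOn_fin {α : Type*} {s : Finset α} {d : ℕ} (hd : 0 < d) (hs : #s ≤ d) :
    ∃ f : α → Fin d, Set.InjOn f s := by
  classical
  obtain ⟨e⟩ := Function.Embedding.nonempty_of_card_le (α := s) (β := Fin d) (by simpa using hs)
  refine ⟨fun x => if hx : x ∈ s then e ⟨x, hx⟩ else ⟨0, hd⟩, fun x hx y hy hxy => ?_⟩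
  simp only [mem_coe.mp hx, mem_coe.mp hy, dite_true] at hxy
  exact congrArg Subtype.val (e.injective hxy)

namespace SimpleGraph

variable {V : Type*} {G : SimpleGraph V} {r a b p u v w x y : V}

theorem Hom.dist_map_le {W : Type*} {G' : SimpleGraph W} (f : G →g G') (h : G.Reachable u v) :
    G'.dist (f u) (f v) ≤ G.dist u v := by
  obtain ⟨q, hq⟩ := h.exists_walk_length_eq_dist
  exact hq ▸ (dist_le (q.map f)).trans_eq (q.length_map f)

theorem Iso.dist_eq {W : Type*} {G' : SimpleGraph W} (f : G ≃g G') (u v : V) :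
    G'.dist (f u) (f v) = G.dist u v := by
  by_cases h : G.Reachable u v
  · refine le_antisymm (f.toHom.dist_map_le h) ?_
    simpa using f.symm.toHom.dist_map_le (h.map f.toHom)
  · have h' : ¬ G'.Reachable (f u) (f v) := fun h' => h (by simpa using h'.map f.symm.toHom)
    rw [dist_eq_zero_of_not_reachable h, dist_eq_zero_of_not_reachable h']

theorem Connected.exists_adj_dist_add_one (hG : G.Connected) (hv : v ≠ r) :
    ∃ y, G.Adj y v ∧ G.dist r y + 1 = G.dist r v := by
  obtain ⟨q, hq⟩ := hG.exists_walk_length_eq_dist v r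
  cases q with
  | nil => exact absurd rfl hv
  | cons hadj q =>
    refine ⟨_, hadj.symm, le_antisymm ?_ ?_⟩
    · rw [Walk.length_cons] at hq
      rw [dist_comm, dist_comm (u := r)]
      exact hq ▸ Nat.add_le_add_right (dist_le q) 1
    · rcases hadj.symm.diff_dist_adj (u := r) with h | h | h <;> omega

section Parent

open scoped Classical in
noncomputable def parent (G : SimpleGraph V) (r v : V) : V :=
  if h : ∃ y, G.Adj y v ∧ G.dist r y + 1 = G.dist r v then h.choose else v

@[simp]
theorem parent_root : G.parent r r = r := by
  simp [parent]

theorem Connected.parent_adj (hG : G.Connected) (hv : v ≠ r) : G.Adj (G.parent r v) v := by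
  have h := hG.exists_adj_dist_add_one hv
  rw [parent, dif_pos h]
  exact h.choose_spec.1

theorem Connected.dist_parent_add_one (hG : G.Connected) (hv : v ≠ r) :
    G.dist r (G.parent r v) + 1 = G.dist r v := by
  have h := hG.exists_adj_dist_add_one hv
  rw [parent, dif_pos h]
  exact h.choose_spec.2

theorem Connected.dist_parent (hG : G.Connected) (v : V) :
    G.dist r (G.parent r v) = G.dist r v - 1 := by
  by_cases hv : v = r
  · simp [hv]
  · have := hG.dist_parent_add_one hv
    omega

@[elab_as_elim]
theorem Connected.induction_on_parent (hG : G.Connected) {P : V → Prop} (root : P r)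
    (step : ∀ v, v ≠ r → P (G.parent r v) → P v) (v : V) : P v := by
  induction h : G.dist r v generalizing v with
  | zero => rwa [← hG.dist_eq_zero_iff.mp h]
  | succ m ih =>
    have hv : v ≠ r := by rintro rfl; simp at h
    exact step v hv (ih _ (by have := hG.dist_parent_add_one hv; omega))

theorem Connected.exists_eq_step_parent {α : Type*} (hG : G.Connected) (a₀ : α)
    (step : α → V → α) :
    ∃ F : V → α, F r = a₀ ∧ ∀ w, w ≠ r → F w = step (F (G.parent r w)) w := by
  let s : ℕ → V → α := fun t => Nat.rec (fun _ => a₀) (fun _ s w => step (s (G.parent r w)) w) t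
  refine ⟨fun w => s (G.dist r w) w, by simp [s], fun w hw => ?_⟩
  show s (G.dist r w) w = _
  rw [← hG.dist_parent_add_one hw]

theorem IsTree.parent_eq_of_adj (hG : G.IsTree) (hadj : G.Adj y v)
    (hy : G.dist r y + 1 = G.dist r v) : G.parent r v = y := by
  have hv : v ≠ r := by rintro rfl; simp at hy
  have hpath : ∀ z (h : G.Adj z v), G.dist r z + 1 = G.dist r v →
      ∃ q : G.Walk r z, (q.concat h).IsPath := fun z h hz => by
    obtain ⟨q, -, hq⟩ := hG.connected.exists_path_of_dist r z
    exact ⟨q, Walk.isPath_of_length_eq_dist _ (by rw [Walk.length_concat, hq, hz])⟩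
  obtain ⟨q₁, hq₁⟩ := hpath _ (hG.connected.parent_adj hv) (hG.connected.dist_parent_add_one hv)
  obtain ⟨q₂, hq₂⟩ := hpath y hadj hy
  exact (Walk.concat_inj ((hG.existsUnique_path r v).unique hq₁ hq₂)).1

theorem IsTree.adj_iff (hG : G.IsTree) :
    G.Adj x y ↔ (x ≠ r ∧ G.parent r x = y) ∨ (y ≠ r ∧ G.parent r y = x) := by
  refine ⟨fun hadj => ?_, ?_⟩
  · rcases hG.dist_eq_dist_add_one_of_adj r hadj with h | h
    · exact .inl ⟨by rintro rfl; simp at h, hG.parent_eq_of_adj hadj.symm h.symm⟩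
    · exact .inr ⟨by rintro rfl; simp at h, hG.parent_eq_of_adj hadj h.symm⟩
  · rintro (⟨hx, rfl⟩ | ⟨hy, rfl⟩)
    exacts [(hG.connected.parent_adj hx).symm, hG.connected.parent_adj hy]

theorem IsTree.parent_apply (hG : G.IsTree) (φ : G ≃g G) (hφ : φ r = r) (v : V) :
    G.parent r (φ v) = φ (G.parent r v) := by
  by_cases hv : v = r
  · simp [hv, hφ]
  have hdist : ∀ x, G.dist r (φ x) = G.dist r x := fun x => by simpa [hφ] using φ.dist_eq r x
  refine hG.parent_eq_of_adj (φ.map_rel_iff.mpr (hG.connected.parent_adj hv)) ?_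
  rw [hdist, hdist]
  exact hG.connected.dist_parent_add_one hv

theorem IsTree.exists_iso_of_parent (hG : G.IsTree) {F : V → V} (hF : Involutive F)
    (hr : F r = r) (hpar : ∀ w, w ≠ r → G.parent r (F w) = F (G.parent r w)) :
    ∃ φ : G ≃g G, ∀ w, φ w = F w := by
  have key : ∀ x y, (F x ≠ r ∧ G.parent r (F x) = F y) ↔ (x ≠ r ∧ G.parent r x = y) := by
    intro x y
    rw [hF.injective.ne_iff' hr]
    exact and_congr_right fun hx => by rw [hpar x hx, hF.injective.eq_iff]
  exact ⟨⟨hF.toPerm F, by intro x y; simp only [Involutive.coe_toPerm, hG.adj_iff (r := r), key]⟩,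
    fun _ => rfl⟩

end Parent

section Ancestor

def IsAncestor (G : SimpleGraph V) (r a w : V) : Prop :=
  ∃ i, (G.parent r)^[i] w = a

theorem IsAncestor.refl : G.IsAncestor r a a :=
  ⟨0, rfl⟩

theorem IsAncestor.of_parent (h : G.IsAncestor r a (G.parent r w)) : G.IsAncestor r a w :=
  let ⟨i, hi⟩ := h
  ⟨i + 1, by rwa [iterate_succ_apply]⟩

theorem IsAncestor.parent_of_ne (h : G.IsAncestor r a w) (hw : w ≠ a) :
    G.IsAncestor r a (G.parent r w) := by
  obtain ⟨_ | i, hi⟩ := h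
  · exact absurd hi hw
  · exact ⟨i, by rwa [iterate_succ_apply] at hi⟩

theorem Connected.dist_parent_iterate (hG : G.Connected) (i : ℕ) (w : V) :
    G.dist r ((G.parent r)^[i] w) = G.dist r w - i := by
  induction i with
  | zero => rfl
  | succ i ih => rw [iterate_succ_apply', hG.dist_parent, ih]; omega

theorem IsAncestor.dist_root_le (hG : G.Connected) (h : G.IsAncestor r a w) :
    G.dist r a ≤ G.dist r w := by
  obtain ⟨i, rfl⟩ := h
  rw [hG.dist_parent_iterate]
  omega

theorem IsAncestor.ne_root (hG : G.Connected) (h : G.IsAncestor r a w) (ha : a ≠ r) : w ≠ r := by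
  rintro rfl
  have := h.dist_root_le hG
  exact ha (hG.dist_eq_zero_iff.mp (by simpa using this)).symm

theorem IsAncestor.dist_le (hG : G.Connected) (h : G.IsAncestor r a w) :
    G.dist a w ≤ G.dist r w - G.dist r a := by
  obtain ⟨i, rfl⟩ := h
  induction i generalizing w with
  | zero => simp
  | succ i ih =>
    rw [iterate_succ_apply]
    by_cases hw : w = r
    · simpa [hw] using ih (w := r)
    have h₁ := ih (w := G.parent r w)
    have h₂ := IsAncestor.dist_root_le hG (⟨i, rfl⟩ : G.IsAncestor r _ (G.parent r w))
    have h₃ := hG.dist_parent_add_one hw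
    have h₄ := hG.dist_triangle (u := (G.parent r)^[i] (G.parent r w)) (v := G.parent r w) (w := w)
    rw [dist_eq_one_iff_adj.mpr (hG.parent_adj hw)] at h₄
    omega

theorem IsAncestor.eq_of_dist_eq (hG : G.Connected) (ha : G.IsAncestor r a w)
    (hb : G.IsAncestor r b w) (h : G.dist r a = G.dist r b) : a = b := by
  obtain ⟨i, rfl⟩ := ha
  obtain ⟨j, rfl⟩ := hb
  rw [hG.dist_parent_iterate, hG.dist_parent_iterate] at h
  by_cases hij : i = j
  · rw [hij]
  have root : ∀ k, G.dist r w - k = 0 → (G.parent r)^[k] w = r := fun k hk =>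
    (hG.dist_eq_zero_iff.mp (by rw [hG.dist_parent_iterate, hk])).symm
  rw [root i (by omega), root j (by omega)]

end Ancestor

section Children

variable [Fintype V]

open scoped Classical in
noncomputable def children (G : SimpleGraph V) (r p : V) : Finset V :=
  {x | x ≠ r ∧ G.parent r x = p}

theorem mem_children : x ∈ G.children r p ↔ x ≠ r ∧ G.parent r x = p := by
  simp [children]

theorem Connected.dist_of_mem_children (hG : G.Connected) (hx : x ∈ G.children r p) :
    G.dist r x = G.dist r p + 1 := by
  obtain ⟨hxr, rfl⟩ := mem_children.mp hx
  exact (hG.dist_parent_add_one hxr).symm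

noncomputable def level (G : SimpleGraph V) (r : V) (j : ℕ) : Finset V :=
  {v | G.dist r v = j}

theorem mem_level {j : ℕ} : v ∈ G.level r j ↔ G.dist r v = j := by
  simp [level]

theorem IsTree.isDistinguishing_of_injOn_children {α : Type*} (hG : G.IsTree)
    (hroot : ∀ φ : G ≃g G, φ r = r) {c : V → α} (hc : ∀ p, Set.InjOn c (G.children r p)) :
    G.IsDistinguishing c := by
  intro φ hφ v
  induction v using hG.connected.induction_on_parent (r := r) with
  | root => exact hroot φ
  | step v hv ih =>
    have hφv : φ v ∈ G.children r (G.parent r v) :=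
      mem_children.mpr ⟨φ.injective.ne_iff' (hroot φ) |>.mpr hv,
        by rw [hG.parent_apply φ (hroot φ), ih]⟩
    exact hc _ hφv (mem_children.mpr ⟨hv, rfl⟩) (hφ v)

variable [DecidableRel G.Adj]

theorem IsTree.card_children_root (hG : G.IsTree) : #(G.children r r) = G.degree r := by
  rw [← card_neighborFinset_eq_degree]
  congr 1
  ext x
  simp [mem_children, hG.adj_iff (r := r)]

theorem IsTree.card_children_add_one (hG : G.IsTree) (hv : v ≠ r) :
    #(G.children r v) + 1 = G.degree v := by
  classical
  have hnbr : G.neighborFinset v = insert (G.parent r v) (G.children r v) := by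
    ext x
    simp [mem_children, hG.adj_iff (r := r), hv, eq_comm]
  have hpar : G.parent r v ∉ G.children r v := fun h => by
    have h₁ := hG.connected.dist_of_mem_children h
    have h₂ := hG.connected.dist_parent_add_one hv
    omega
  rw [← card_neighborFinset_eq_degree, hnbr, card_insert_of_notMem hpar]

end Children

section Signature

variable [Fintype V] {col sg : V → ℕ}

/-- Sets rather than multisets of children's codes suffice: subtrees are only ever matched below
siblings whose codes are pairwise distinct. -/
def IsSignature (G : SimpleGraph V) (r : V) (col sg : V → ℕ) : Prop :=
  ∀ v, sg v = Nat.pair (col v) (Encodable.encode ((G.children r v).image sg))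

theorem exists_isSignature (height : V → ℕ)
    (hheight : ∀ v, ∀ x ∈ G.children r v, height x + 1 = height v) (col : V → ℕ) :
    ∃ sg, G.IsSignature r col sg := by
  let s : ℕ → V → ℕ := fun t =>
    Nat.rec (fun v => Nat.pair (col v) (Encodable.encode (∅ : Finset ℕ)))
      (fun _ s v => Nat.pair (col v) (Encodable.encode ((G.children r v).image s))) t
  refine ⟨fun v => s (height v) v, fun v => ?_⟩
  show s (height v) v = _
  rcases h : height v with _ | t
  · have : G.children r v = ∅ := eq_empty_of_forall_notMem fun x hx => by
      have := hheight v x hx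
      omega
    simp [this, s]
  · show Nat.pair _ (Encodable.encode ((G.children r v).image (s t))) = _
    congr 2
    refine image_congr fun x hx => ?_
    have := hheight v x hx
    simp only [show height x = t by omega]

theorem IsSignature.col_eq (hs : G.IsSignature r col sg) (h : sg x = sg y) : col x = col y := by
  rw [hs x, hs y, Nat.pair_eq_pair] at h
  exact h.1

theorem IsSignature.image_eq (hs : G.IsSignature r col sg) (h : sg x = sg y) :
    (G.children r x).image sg = (G.children r y).image sg := by
  rw [hs x, hs y, Nat.pair_eq_pair] at h
  exact Encodable.encode_injective h.2

theorem exists_deepest_collision (h : ∃ p, ¬ Set.InjOn sg (G.children r p)) :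
    ∃ p a b, a ∈ G.children r p ∧ b ∈ G.children r p ∧ a ≠ b ∧ sg a = sg b ∧
      ∀ q, ∀ x ∈ G.children r q, ∀ y ∈ G.children r q,
        G.dist r a < G.dist r x → sg x = sg y → x = y := by
  classical
  let S : Finset (V × V × V) :=
    {t | t.2.1 ∈ G.children r t.1 ∧ t.2.2 ∈ G.children r t.1 ∧ t.2.1 ≠ t.2.2 ∧ sg t.2.1 = sg t.2.2}
  have hS : S.Nonempty := by
    obtain ⟨p, hp⟩ := h
    simp only [Set.InjOn, not_forall] at hp
    obtain ⟨x, hx, y, hy, hxy, hne⟩ := hp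
    exact ⟨(p, x, y), by simp_all [S]⟩
  obtain ⟨⟨p, a, b⟩, hmem, hmax⟩ := exists_max_image S (fun t => G.dist r t.2.1) hS
  simp only [S, mem_filter, mem_univ, true_and] at hmem
  refine ⟨p, a, b, hmem.1, hmem.2.1, hmem.2.2.1, hmem.2.2.2, fun q x hx y hy hlt hxy => ?_⟩
  by_contra hne
  have : G.dist r x ≤ G.dist r a := hmax (q, x, y) (by simp [S, hx, hy, hne, hxy])
  omega

end Signature

section Swap

variable [Fintype V] {col sg : V → ℕ} {F : V → V}

open scoped Classical in
noncomputable def swapStep (G : SimpleGraph V) (r : V) (sg : V → ℕ) (a b q w : V) : V :=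
  if w = a then b else if w = b then a else if q = G.parent r w then w
  else if h : ∃ x ∈ G.children r q, sg x = sg w then h.choose else w

/-- `F` exchanges the subtrees below `a` and `b`: a vertex `w` of one of them is sent to a child
of `F (parent w)` with the signature of `w`. -/
def IsSubtreeSwap (G : SimpleGraph V) (r : V) (sg : V → ℕ) (a b : V) (F : V → V) : Prop :=
  F r = r ∧ ∀ w, w ≠ r → F w = swapStep G r sg a b (F (G.parent r w)) w

theorem swapStep_comm (hab : a ≠ b) : swapStep G r sg a b = swapStep G r sg b a := by
  funext q w
  by_cases hwa : w = a <;> by_cases hwb : w = b <;> simp_all [swapStep]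

theorem IsSubtreeSwap.symm (hF : G.IsSubtreeSwap r sg a b F) (hab : a ≠ b) :
    G.IsSubtreeSwap r sg b a F := by
  rwa [IsSubtreeSwap, ← swapStep_comm hab]

theorem IsSubtreeSwap.apply_left (hF : G.IsSubtreeSwap r sg a b F) (ha : a ≠ r) : F a = b := by
  rw [hF.2 a ha, swapStep, if_pos rfl]

theorem IsSubtreeSwap.apply_eq_self (hG : G.Connected) (hF : G.IsSubtreeSwap r sg a b F)
    (w : V) (ha : ¬ G.IsAncestor r a w) (hb : ¬ G.IsAncestor r b w) : F w = w := by
  induction w using hG.induction_on_parent (r := r) with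
  | root => exact hF.1
  | step w hw ih =>
    have hwa : w ≠ a := fun h => ha (h ▸ IsAncestor.refl)
    have hwb : w ≠ b := fun h => hb (h ▸ IsAncestor.refl)
    rw [hF.2 w hw, ih (mt IsAncestor.of_parent ha) (mt IsAncestor.of_parent hb)]
    simp [swapStep, hwa, hwb]

theorem IsSubtreeSwap.apply_of_isAncestor (hG : G.Connected) (hsg : G.IsSignature r col sg)
    (hF : G.IsSubtreeSwap r sg a b F) (ha : a ∈ G.children r p) (hb : b ∈ G.children r p)
    (hab : a ≠ b) (hsgab : sg a = sg b) (w : V) (haw : G.IsAncestor r a w) :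
    G.IsAncestor r b (F w) ∧ sg (F w) = sg w ∧ F w ∈ G.children r (F (G.parent r w)) := by
  have hdab : G.dist r a = G.dist r b := by
    rw [hG.dist_of_mem_children ha, hG.dist_of_mem_children hb]
  have har := (mem_children.mp ha).1
  induction w using hG.induction_on_parent (r := r) with
  | root => exact absurd rfl (haw.ne_root hG har)
  | step w hw ih =>
    by_cases hwa : w = a
    · subst hwa
      have hpa : ∀ c, G.dist r c = G.dist r w → ¬ G.IsAncestor r c (G.parent r w) :=
        fun c hc h => by
          have := h.dist_root_le hG
          have := hG.dist_parent_add_one hw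
          omega
      rw [hF.apply_left hw, hF.apply_eq_self hG _ (hpa _ rfl) (hpa _ hdab.symm),
        (mem_children.mp ha).2]
      exact ⟨IsAncestor.refl, hsgab.symm, hb⟩
    have hap := haw.parent_of_ne hwa
    obtain ⟨hbq, hsgq, -⟩ := ih hap
    have hwb : w ≠ b := fun h => hab (haw.eq_of_dist_eq hG (h ▸ IsAncestor.refl) hdab)
    have hqp : G.parent r w ≠ F (G.parent r w) := fun h =>
      hab (hap.eq_of_dist_eq hG (h ▸ hbq) hdab)
    have hex : ∃ x ∈ G.children r (F (G.parent r w)), sg x = sg w := by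
      have : sg w ∈ (G.children r (F (G.parent r w))).image sg := by
        rw [hsg.image_eq hsgq]
        exact mem_image_of_mem sg (mem_children.mpr ⟨hw, rfl⟩)
      simpa using this
    rw [hF.2 w hw, swapStep, if_neg hwa, if_neg hwb, if_neg (Ne.symm hqp), dif_pos hex]
    obtain ⟨hx, hsgx⟩ := hex.choose_spec
    exact ⟨IsAncestor.of_parent (by rw [(mem_children.mp hx).2]; exact hbq), hsgx, hx⟩

/-- Below the level of `a`, siblings have distinct signatures, so the child of `parent w` chosen
by the swap is `w` itself. -/
theorem IsSubtreeSwap.apply_apply (hG : G.Connected) (hsg : G.IsSignature r col sg)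
    (hF : G.IsSubtreeSwap r sg a b F) (ha : a ∈ G.children r p) (hb : b ∈ G.children r p)
    (hab : a ≠ b) (hsgab : sg a = sg b)
    (hinj : ∀ q, ∀ x ∈ G.children r q, ∀ y ∈ G.children r q,
      G.dist r a < G.dist r x → sg x = sg y → x = y)
    (w : V) (haw : G.IsAncestor r a w) : F (F w) = w := by
  have hdab : G.dist r a = G.dist r b := by
    rw [hG.dist_of_mem_children ha, hG.dist_of_mem_children hb]
  have har := (mem_children.mp ha).1
  induction w using hG.induction_on_parent (r := r) with
  | root => exact absurd rfl (haw.ne_root hG har)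
  | step w hw ih =>
    by_cases hwa : w = a
    · rw [hwa, hF.apply_left har, (hF.symm hab).apply_left (mem_children.mp hb).1]
    have hap := haw.parent_of_ne hwa
    obtain ⟨hbq, -, -⟩ := hF.apply_of_isAncestor hG hsg ha hb hab hsgab _ hap
    obtain ⟨-, hsgx, hx⟩ := hF.apply_of_isAncestor hG hsg ha hb hab hsgab w haw
    obtain ⟨hxr, hxq⟩ := mem_children.mp hx
    have hdx := hG.dist_of_mem_children hx
    have hdq := hbq.dist_root_le hG
    have hdp := hap.dist_root_le hG
    have hxa : F w ≠ a := fun h => by rw [h] at hdx; omega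
    have hxb : F w ≠ b := fun h => by rw [h] at hdx; omega
    have hqp : G.parent r w ≠ F (G.parent r w) := fun h =>
      hab (hap.eq_of_dist_eq hG (h ▸ hbq) hdab)
    have hwp : w ∈ G.children r (G.parent r w) := mem_children.mpr ⟨hw, rfl⟩
    have hex : ∃ y ∈ G.children r (G.parent r w), sg y = sg (F w) := ⟨w, hwp, hsgx.symm⟩
    rw [hF.2 _ hxr, hxq, ih hap, swapStep, if_neg hxa, if_neg hxb, if_neg (hxq ▸ hqp),
      dif_pos hex]
    obtain ⟨hy, hsgy⟩ := hex.choose_spec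
    have hdy := hG.dist_of_mem_children hy
    exact hinj _ _ hy _ hwp (by omega) (hsgy.trans hsgx)

theorem IsTree.exists_iso_swap (hG : G.IsTree) (hsg : G.IsSignature r col sg)
    (ha : a ∈ G.children r p) (hb : b ∈ G.children r p) (hab : a ≠ b) (hsgab : sg a = sg b)
    (hinj : ∀ q, ∀ x ∈ G.children r q, ∀ y ∈ G.children r q,
      G.dist r a < G.dist r x → sg x = sg y → x = y) :
    ∃ φ : G ≃g G, (∀ w, col (φ w) = col w) ∧ φ a = b := by
  have hG' := hG.connected
  obtain ⟨F, hF⟩ := hG'.exists_eq_step_parent r (swapStep G r sg a b)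
  change G.IsSubtreeSwap r sg a b F at hF
  have hinj' : ∀ q, ∀ x ∈ G.children r q, ∀ y ∈ G.children r q,
      G.dist r b < G.dist r x → sg x = sg y → x = y := by
    rw [hG'.dist_of_mem_children ha, ← hG'.dist_of_mem_children hb] at hinj
    exact hinj
  have key : ∀ w, F (F w) = w ∧ (w ≠ r → G.parent r (F w) = F (G.parent r w)) ∧
      sg (F w) = sg w := by
    intro w
    by_cases haw : G.IsAncestor r a w
    · obtain ⟨-, hsgw, hw⟩ := hF.apply_of_isAncestor hG' hsg ha hb hab hsgab w haw
      exact ⟨hF.apply_apply hG' hsg ha hb hab hsgab hinj w haw,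
        fun _ => (mem_children.mp hw).2, hsgw⟩
    by_cases hbw : G.IsAncestor r b w
    · have hF' := hF.symm hab
      obtain ⟨-, hsgw, hw⟩ := hF'.apply_of_isAncestor hG' hsg hb ha hab.symm hsgab.symm w hbw
      exact ⟨hF'.apply_apply hG' hsg hb ha hab.symm hsgab.symm hinj' w hbw,
        fun _ => (mem_children.mp hw).2, hsgw⟩
    have hw := hF.apply_eq_self hG' w haw hbw
    have hpw := hF.apply_eq_self hG' _ (mt IsAncestor.of_parent haw) (mt IsAncestor.of_parent hbw)
    exact ⟨by rw [hw, hw], fun _ => by rw [hw, hpw], by rw [hw]⟩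
  obtain ⟨φ, hφ⟩ := hG.exists_iso_of_parent (fun w => (key w).1) hF.1 fun w hw => (key w).2.1 hw
  refine ⟨φ, fun w => ?_, ?_⟩
  · rw [hφ]
    exact hsg.col_eq (key w).2.2
  · rw [hφ]
    exact hF.apply_left (mem_children.mp ha).1

end Swap

/-- `G` is the tree `T(n,d)` rooted at `r`. -/
structure IsTnd (G : SimpleGraph V) [Fintype V] [DecidableRel G.Adj] (r : V) (n d : ℕ) : Prop where
  isTree : G.IsTree
  degree_root : G.degree r = d
  degree_eq_one_or_eq : ∀ v, G.degree v = 1 ∨ G.degree v = d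
  dist_eq_of_degree_eq_one : ∀ v, G.degree v = 1 → G.dist r v = n

namespace IsTnd

variable [Fintype V] [DecidableRel G.Adj] {n d k : ℕ} {col sg : V → ℕ}

theorem degree_eq_one_of_children_eq_empty (hT : G.IsTnd r n d) (hd : 0 < d)
    (hw : G.children r w = ∅) : G.degree w = 1 := by
  by_cases hwr : w = r
  · subst hwr
    have := hT.isTree.card_children_root (r := w)
    rw [hw, card_empty, hT.degree_root] at this
    omega
  · rw [← hT.isTree.card_children_add_one hwr, hw, card_empty]

theorem exists_leaf_below (hT : G.IsTnd r n d) (hd : 0 < d) (v : V) :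
    ∃ ℓ, G.IsAncestor r v ℓ ∧ G.degree ℓ = 1 := by
  classical
  obtain ⟨ℓ, hℓ, hmax⟩ := exists_max_image {w | G.IsAncestor r v w} (G.dist r)
    ⟨v, by simpa using IsAncestor.refl⟩
  refine ⟨ℓ, by simpa using hℓ, hT.degree_eq_one_of_children_eq_empty hd <|
    eq_empty_of_forall_notMem fun x hx => ?_⟩
  have hvx : G.IsAncestor r v x :=
    IsAncestor.of_parent (by rw [(mem_children.mp hx).2]; exact (mem_filter.mp hℓ).2)
  have h₁ := hmax x (by simpa using hvx)
  have h₂ := hT.isTree.connected.dist_of_mem_children hx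
  omega

theorem dist_le (hT : G.IsTnd r n d) (hd : 0 < d) (v : V) : G.dist r v ≤ n := by
  obtain ⟨ℓ, hvℓ, hℓ⟩ := hT.exists_leaf_below hd v
  exact hT.dist_eq_of_degree_eq_one ℓ hℓ ▸ hvℓ.dist_root_le hT.isTree.connected

theorem degree_eq_of_dist_lt (hT : G.IsTnd r n d) (hv : G.dist r v < n) : G.degree v = d :=
  (hT.degree_eq_one_or_eq v).resolve_left fun h => by
    have := hT.dist_eq_of_degree_eq_one v h
    omega

theorem card_children_le (hT : G.IsTnd r n d) (p : V) : #(G.children r p) ≤ d := by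
  by_cases hp : p = r
  · rw [hp, hT.isTree.card_children_root, hT.degree_root]
  · have := hT.isTree.card_children_add_one hp
    rcases hT.degree_eq_one_or_eq p with h | h <;> omega

theorem apply_root (hT : G.IsTnd r n d) (hd : 0 < d) (φ : G ≃g G) : φ r = r := by
  by_contra hne
  have hG := hT.isTree.connected
  obtain ⟨ℓ, hanc, hℓ⟩ := hT.exists_leaf_below hd (φ r)
  have h₁ : G.dist (φ r) ℓ = n := by
    rw [← φ.apply_symm_apply ℓ, φ.dist_eq]
    exact hT.dist_eq_of_degree_eq_one _ (by rwa [← φ.degree_eq, φ.apply_symm_apply])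
  have h₂ := hanc.dist_le hG
  have h₃ := hanc.dist_root_le hG
  have h₄ := hG.pos_dist_of_ne (Ne.symm hne)
  have h₅ := hT.dist_eq_of_degree_eq_one ℓ hℓ
  omega

theorem exists_isDistinguishing (hT : G.IsTnd r n d) (hd : 0 < d) :
    ∃ c : V → Fin d, G.IsDistinguishing c := by
  choose f hf using fun p => Finset.exists_injOn_fin hd (hT.card_children_le p)
  refine ⟨fun v => f (G.parent r v) v,
    hT.isTree.isDistinguishing_of_injOn_children (hT.apply_root hd) fun p x hx y hy hxy => ?_⟩
  simp only [(mem_children.mp hx).2, (mem_children.mp hy).2] at hxy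
  exact hf p hx hy hxy

theorem image_children_eq (hT : G.IsTnd r n d) (hd : 0 < d) (hv : v ≠ r)
    (hinj : Set.InjOn sg (G.children r v))
    (hcard : #((G.level r (G.dist r v + 1)).image sg) ≤ d - 1) :
    (G.children r v).image sg = (G.level r (G.dist r v + 1)).image sg := by
  have hsub : G.children r v ⊆ G.level r (G.dist r v + 1) := fun x hx => by
    simpa [mem_level] using hT.isTree.connected.dist_of_mem_children hx
  refine eq_of_subset_of_card_le (image_subset_image hsub) ?_
  obtain h | ⟨s, hs⟩ := ((G.level r (G.dist r v + 1)).image sg).eq_empty_or_nonempty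
  · simp [h]
  obtain ⟨x, hx, -⟩ := mem_image.mp hs
  have h₁ := hT.dist_le hd x
  have h₂ := hT.degree_eq_of_dist_lt (v := v) (by rw [mem_level] at hx; omega)
  have h₃ := hT.isTree.card_children_add_one hv
  rw [card_image_of_injOn hinj]
  omega

theorem card_image_level_le (hT : G.IsTnd r n d) (hk : k < d) (hcol : ∀ v, col v < k)
    (hsg : G.IsSignature r col sg) (hinj : ∀ p, Set.InjOn sg (G.children r p)) {j : ℕ}
    (hj : 1 ≤ j) : #((G.level r j).image sg) ≤ k := by
  have hd : 0 < d := by omega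
  obtain ⟨t, ht⟩ : ∃ t, n < j + t := ⟨n + 1, by omega⟩
  induction t generalizing j with
  | zero =>
    have : G.level r j = ∅ := eq_empty_of_forall_notMem fun x hx => by
      have := hT.dist_le hd x
      rw [mem_level] at hx
      omega
    simp [this]
  | succ t ih =>
    have hnext := ih (j := j + 1) (by omega) (by omega)
    let code : ℕ → ℕ := fun c => Nat.pair c (Encodable.encode ((G.level r (j + 1)).image sg))
    calc #((G.level r j).image sg) ≤ #((range k).image code) := by
          refine card_le_card fun s hs => ?_
          obtain ⟨v, hv, rfl⟩ := mem_image.mp hs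
          rw [mem_level] at hv
          have hvr : v ≠ r := by rintro rfl; simp at hv; omega
          rw [hsg v, hT.image_children_eq hd hvr (hinj v) (by rw [hv]; omega), hv]
          exact mem_image_of_mem _ (mem_range.mpr (hcol v))
      _ ≤ k := card_image_le.trans (card_range k).le

theorem exists_not_injOn_signature (hT : G.IsTnd r n d) (hk : k < d) (hcol : ∀ v, col v < k)
    (hsg : G.IsSignature r col sg) : ∃ p, ¬ Set.InjOn sg (G.children r p) := by
  by_contra! hinj
  have h₁ := hT.card_image_level_le hk hcol hsg hinj le_rfl
  have h₂ : (G.children r r).image sg ⊆ (G.level r 1).image sg :=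
    image_subset_image fun x hx => by
      simpa [mem_level] using hT.isTree.connected.dist_of_mem_children hx
  have h₃ := card_le_card h₂
  rw [card_image_of_injOn (hinj r), hT.isTree.card_children_root, hT.degree_root] at h₃
  omega

theorem not_isDistinguishing (hT : G.IsTnd r n d) (hk : k < d) (c : V → Fin k) :
    ¬ G.IsDistinguishing c := by
  intro hc
  have hd : 0 < d := by omega
  obtain ⟨sg, hsg⟩ := exists_isSignature (G := G) (r := r) (fun v => n - G.dist r v)
    (fun v x hx => by
      have := hT.isTree.connected.dist_of_mem_children hx
      have := hT.dist_le hd x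
      omega) (fun v => c v)
  obtain ⟨p, a, b, ha, hb, hab, hsgab, hinj⟩ :=
    exists_deepest_collision (hT.exists_not_injOn_signature hk (fun v => (c v).isLt) hsg)
  obtain ⟨φ, hφc, hφa⟩ := hT.isTree.exists_iso_swap hsg ha hb hab hsgab hinj
  exact hab (hφa ▸ hc φ (fun w => Fin.ext (hφc w)) a).symm

end IsTnd

theorem distinguishingNumber_eq_of_forall_lt {d : ℕ} (hd : ∃ c : V → Fin d, G.IsDistinguishing c)
    (hlt : ∀ k < d, ∀ c : V → Fin k, ¬ G.IsDistinguishing c) : G.distinguishingNumber = d :=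
  le_antisymm (Nat.sInf_le hd)
    (le_csInf ⟨d, hd⟩ fun k ⟨c, hc⟩ => not_lt.mp fun hk => hlt k hk c hc)

end SimpleGraph

theorem distinguishingNumber_Tnd_general {V : Type*} [Fintype V] (G : SimpleGraph V)
    [DecidableRel G.Adj] (n d : ℕ) (hd : 3 ≤ d)
    (htree : G.IsTree) (r : V)
    (hroot : G.degree r = d)
    (hdeg : ∀ v, G.degree v = 1 ∨ G.degree v = d)
    (hleaf : ∀ v, G.degree v = 1 → G.dist r v = n) :
    G.distinguishingNumber = d := by
  have hT : G.IsTnd r n d := ⟨htree, hroot, hdeg, hleaf⟩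
  exact SimpleGraph.distinguishingNumber_eq_of_forall_lt (hT.exists_isDistinguishing (by omega))
    fun _ hk c => hT.not_isDistinguishing hk c

/-- the tree `T(n,d)` (every vertex of degree 1 or `d`, rooted at a
vertex of degree `d`, all leaves at distance exactly `n` from the root) has
distinguishing number `d`, for `n ≥ 1` and `d ≥ 3`. -/
theorem distinguishingNumber_Tnd {V : Type*} [Fintype V] (G : SimpleGraph V)
    [DecidableRel G.Adj] (n d : ℕ) (hn : 1 ≤ n) (hd : 3 ≤ d)
    (htree : G.IsTree) (r : V)
    (hroot : G.degree r = d)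
    (hdeg : ∀ v, G.degree v = 1 ∨ G.degree v = d)
    (hleaf : ∀ v, G.degree v = 1 → G.dist r v = n) :
    G.distinguishingNumber = d :=
  distinguishingNumber_Tnd_general G n d hd htree r hroot hdeg hleaf
end

section
/- Let G be a connected graph with maximum degree at most 3 that contains a vertex v of degree 1 whose unique neighbor u has no other neighbor of degree 1. If G has at least 3 vertices, then the distinguishing number of G is at most 2. -/
set_option linter.unusedSectionVars false
set_option maxHeartbeats 1000000

namespace OnlyChildAux

open SimpleGraph Classical

variable {V : Type*} [Fintype V] {G : SimpleGraph V} [DecidableRel G.Adj]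

/-- iso preserves degree -/
lemma iso_degree (φ : G ≃g G) (x : V) : G.degree (φ x) = G.degree x := by
  rw [← SimpleGraph.card_neighborSet_eq_degree, ← SimpleGraph.card_neighborSet_eq_degree]
  exact Fintype.card_congr (φ.mapNeighborSet x).symm

lemma iso_dist_le (φ : G ≃g G) (hconn : G.Connected) (a b : V) :
    G.dist (φ a) (φ b) ≤ G.dist a b := by
  obtain ⟨p, hp⟩ := (hconn a b).exists_walk_length_eq_dist
  calc G.dist (φ a) (φ b) ≤ (p.map φ.toEmbedding.toHom).length := SimpleGraph.dist_le _
    _ = G.dist a b := by rw [SimpleGraph.Walk.length_map, hp]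

lemma iso_dist (φ : G ≃g G) (hconn : G.Connected) (a b : V) :
    G.dist (φ a) (φ b) = G.dist a b := by
  refine le_antisymm (iso_dist_le φ hconn a b) ?_
  have := iso_dist_le φ.symm hconn (φ a) (φ b)
  simpa using this

/-- a rank function -/
noncomputable def ev (x : V) : ℕ := ((Fintype.equivFin V) x : ℕ)

lemma ev_lt (x : V) : ev x < Fintype.card V := ((Fintype.equivFin V) x).2

lemma ev_inj : Function.Injective (ev (V := V)) := by
  intro x y h
  exact (Fintype.equivFin V).injective (Fin.ext h)

/-- key: leaves first, then by rank -/
noncomputable def key (G : SimpleGraph V) [DecidableRel G.Adj] (x : V) : ℕ :=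
  (if G.degree x = 1 then 0 else 1) * Fintype.card V + ev x

lemma key_inj : Function.Injective (key G) := by
  intro x y h
  unfold key at h
  have hx := ev_lt x
  have hy := ev_lt y
  by_cases h1 : G.degree x = 1 <;> by_cases h2 : G.degree y = 1 <;>
    simp [h1, h2] at h <;> first
      | exact ev_inj h
      | omega

lemma leaf_of_key_lt {x y : V} (hx : G.degree x = 1) (h : key G y < key G x) :
    G.degree y = 1 := by
  unfold key at h
  simp only [hx, if_true] at h
  by_contra h2
  simp only [h2, if_false] at h
  have := ev_lt x
  omega

variable (G) in
/-- back neighborhood wrt BFS from `v` -/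
def Bk (v x : V) : Set V := {z | G.Adj x z ∧ G.dist v z + 1 = G.dist v x}

variable (G) in
def SameClass (v x y : V) : Prop :=
  G.dist v x = G.dist v y ∧ Bk G v x = Bk G v y

variable (G) in
/-- the coloring -/
noncomputable def col (v x : V) : Fin 2 :=
  if x = v then 1
  else if ∀ y, y ≠ x → SameClass G v x y → key G x < key G y then 0 else 1

lemma col_v (v : V) : col G v v = 1 := by simp [col]

/-- existence of a back neighbor -/
lemma exists_back (hconn : G.Connected) {v x : V} (h : G.dist v x ≠ 0) :
    ∃ z, z ∈ Bk G v x := by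
  obtain ⟨p, hp⟩ := (hconn x v).exists_walk_length_eq_dist
  cases p with
  | nil => exact absurd SimpleGraph.dist_self h
  | cons hadj q =>
    rename_i y
    refine ⟨y, hadj, ?_⟩
    have h1 : G.dist v y ≤ q.length := by
      have := SimpleGraph.dist_le q.reverse
      simpa [SimpleGraph.Walk.length_reverse] using this
    have h2 : G.dist v x ≤ G.dist v y + 1 := by
      calc G.dist v x ≤ G.dist v y + G.dist y x := hconn.dist_triangle
        _ ≤ G.dist v y + 1 := by
            have : G.dist y x ≤ 1 := by
              have := SimpleGraph.dist_le (SimpleGraph.Walk.cons hadj.symm SimpleGraph.Walk.nil)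
              simpa using this
            omega
    have h3 : q.length + 1 = G.dist x v := by simpa using hp
    rw [SimpleGraph.dist_comm] at h3
    omega

lemma mem_Bk_dist {v x z : V} (h : z ∈ Bk G v x) : G.dist v z + 1 = G.dist v x := h.2

/-- classes have at most 2 elements -/
lemma class_small (hconn : G.Connected) (hmax : G.maxDegree ≤ 3)
    {v : V} (hv : G.degree v = 1) {x y w : V} (hdx : G.dist v x ≠ 0)
    (hy : SameClass G v x y) (hw : SameClass G v x w)
    (hyx : y ≠ x) (hwx : w ≠ x) : y = w := by
  classical
  by_contra hyw
  obtain ⟨z, hz⟩ := exists_back hconn hdx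
  have hzy : z ∈ Bk G v y := hy.2 ▸ hz
  have hzw : z ∈ Bk G v w := hw.2 ▸ hz
  -- x, y, w are distinct neighbors of z at distance (dist v z) + 1
  have hdz : G.dist v z + 1 = G.dist v x := hz.2
  by_cases h0 : G.dist v z = 0
  · -- z = v, degree 1, but x and y are distinct neighbors
    have hzv : z = v := by
      rcases SimpleGraph.dist_eq_zero_iff_eq_or_not_reachable.mp h0 with h | h
      · exact h.symm
      · exact absurd (hconn v z) h
    subst hzv
    have hx' : x ∈ G.neighborFinset z := by
      rw [SimpleGraph.mem_neighborFinset]; exact hz.1.symm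
    have hy' : y ∈ G.neighborFinset z := by
      rw [SimpleGraph.mem_neighborFinset]; exact hzy.1.symm
    have : ({x, y} : Finset V).card ≤ G.degree z := by
      apply Finset.card_le_card
      intro a ha
      simp only [Finset.mem_insert, Finset.mem_singleton] at ha
      rcases ha with rfl | rfl <;> assumption
    rw [Finset.card_insert_of_notMem (by simpa using fun h => hyx h.symm),
      Finset.card_singleton] at this
    rw [hv] at this
    omega
  · -- z has a back neighbor b distinct from x, y, w
    obtain ⟨b, hb⟩ := exists_back hconn h0
    have hbz : G.dist v b + 1 = G.dist v z := hb.2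
    have hbx : b ≠ x := fun h => by rw [h] at hbz; omega
    have hby : b ≠ y := fun h => by rw [h] at hbz; have := hy.1; omega
    have hbw : b ≠ w := fun h => by rw [h] at hbz; have := hw.1; omega
    have hsub : ({x, y, w, b} : Finset V) ⊆ G.neighborFinset z := by
      intro a ha
      simp only [Finset.mem_insert, Finset.mem_singleton] at ha
      rw [SimpleGraph.mem_neighborFinset]
      rcases ha with rfl | rfl | rfl | rfl
      · exact hz.1.symm
      · exact hzy.1.symm
      · exact hzw.1.symm
      · exact hb.1
    have hcard : ({x, y, w, b} : Finset V).card = 4 := by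
      rw [Finset.card_insert_of_notMem (by simp [hyx.symm, hwx.symm, hbx.symm]),
        Finset.card_insert_of_notMem (by simp [hyw, hby.symm]),
        Finset.card_insert_of_notMem (by simp [hbw.symm]),
        Finset.card_singleton]
    have h4 : 4 ≤ G.degree z := hcard ▸ Finset.card_le_card hsub
    have := G.degree_le_maxDegree z
    omega

/-- in a class of two non-v vertices, colors differ -/
lemma col_ne (hconn : G.Connected) (hmax : G.maxDegree ≤ 3) {v x y : V}
    (hv : G.degree v = 1)
    (hxv : x ≠ v) (hyv : y ≠ v) (hxy : x ≠ y) (hcl : SameClass G v x y) :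
    col G v x ≠ col G v y := by
  have hkey : key G x ≠ key G y := fun h => hxy (key_inj h)
  have hdx : G.dist v x ≠ 0 := by
    intro h0
    rcases SimpleGraph.dist_eq_zero_iff_eq_or_not_reachable.mp h0 with h | h
    · exact hxv h.symm
    · exact absurd (hconn v x) h
  have hdy : G.dist v y ≠ 0 := hcl.1 ▸ hdx
  have hclsym : SameClass G v y x := ⟨hcl.1.symm, hcl.2.symm⟩
  -- any z in the class of x other than x equals y, and vice versa
  have huniq_x : ∀ z, z ≠ x → SameClass G v x z → z = y :=
    fun z hz hcz => class_small hconn hmax hv hdx hcz hcl hz hxy.symm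
  have huniq_y : ∀ z, z ≠ y → SameClass G v y z → z = x :=
    fun z hz hcz => class_small hconn hmax hv hdy hcz hclsym hz hxy
  rcases lt_or_gt_of_ne hkey with hlt | hlt
  · -- x is the min of its class, y is not
    have hcx : col G v x = 0 := by
      rw [col, if_neg hxv, if_pos]
      intro z hz hcz
      rw [huniq_x z hz hcz]; exact hlt
    have hcy : col G v y = 1 := by
      rw [col, if_neg hyv, if_neg]
      push_neg
      exact ⟨x, hxy, hclsym, le_of_lt hlt⟩
    rw [hcx, hcy]; decide
  · have hcx : col G v x = 1 := by
      rw [col, if_neg hxv, if_neg]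
      push_neg
      exact ⟨y, hxy.symm, hcl, le_of_lt hlt⟩
    have hcy : col G v y = 0 := by
      rw [col, if_neg hyv, if_pos]
      intro z hz hcz
      rw [huniq_y z hz hcz]; exact hlt
    rw [hcx, hcy]; decide

/-- a leaf ≠ v with color 1 has a leaf classmate -/
lemma leaf_sibling {v w : V} (hwv : w ≠ v) (hleaf : G.degree w = 1)
    (hc : col G v w = 1) : ∃ y, y ≠ w ∧ G.degree y = 1 ∧ SameClass G v w y := by
  rw [col, if_neg hwv] at hc
  by_cases hmin : ∀ y, y ≠ w → SameClass G v w y → key G w < key G y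
  · rw [if_pos hmin] at hc; exact absurd hc (by decide)
  · push_neg at hmin
    obtain ⟨y, hyw, hcl, hkle⟩ := hmin
    have : key G y < key G w := lt_of_le_of_ne hkle (fun h => hyw (key_inj h))
    exact ⟨y, hyw, leaf_of_key_lt hleaf this, hcl⟩

/-- a leaf's unique neighbor -/
lemma leaf_unique_nbr {w a b : V} (hleaf : G.degree w = 1)
    (ha : G.Adj w a) (hb : G.Adj w b) : a = b := by
  classical
  have := Finset.card_eq_one.mp (by rw [← SimpleGraph.degree]; exact hleaf :
    (G.neighborFinset w).card = 1)
  obtain ⟨c, hc⟩ := this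
  have ha' : a ∈ G.neighborFinset w := by rwa [SimpleGraph.mem_neighborFinset]
  have hb' : b ∈ G.neighborFinset w := by rwa [SimpleGraph.mem_neighborFinset]
  rw [hc, Finset.mem_singleton] at ha' hb'
  rw [ha', hb']

end OnlyChildAux

open OnlyChildAux in
theorem distinguishingNumber_le_two_of_only_child {V : Type*} [Fintype V]
    (G : SimpleGraph V) [DecidableRel G.Adj]
    (hconn : G.Connected) (hmax : G.maxDegree ≤ 3) (hcard : 3 ≤ Fintype.card V)
    (v u : V) (hv : G.degree v = 1) (huv : G.Adj u v)
    (honly : ∀ w, G.Adj u w → G.degree w = 1 → w = v) :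
    G.distinguishingNumber ≤ 2 := by
  have h2 : 2 ∈ {k : ℕ | ∃ c : V → Fin k, G.IsDistinguishing c} := by
    refine ⟨col G v, ?_⟩
    intro φ hφ
    have hdist_ne : ∀ x : V, x ≠ v → G.dist v x ≠ 0 := by
      intro x hx h0
      rcases SimpleGraph.dist_eq_zero_iff_eq_or_not_reachable.mp h0 with h | h
      · exact hx h.symm
      · exact h (hconn v x)
    -- Step 1: φ v = v
    have hvfix : φ v = v := by
      by_contra hne
      set w := φ v with hw
      have hwleaf : G.degree w = 1 := by rw [hw, iso_degree φ v, hv]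
      have hcw : col G v w = 1 := by rw [hw, hφ v, col_v]
      obtain ⟨y, hyw, hyleaf, hcl⟩ := leaf_sibling hne hwleaf hcw
      have hdw : G.dist v w ≠ 0 := hdist_ne w hne
      obtain ⟨z, hz⟩ := exists_back hconn hdw
      have hadj : G.Adj w (φ u) := by
        rw [hw]
        exact φ.map_adj_iff.mpr huv.symm
      have hzeq : φ u = z := leaf_unique_nbr hwleaf hadj hz.1
      have hzy : z ∈ Bk G v y := hcl.2 ▸ hz
      have hyz : G.Adj y (φ u) := hzeq ▸ hzy.1
      have h1 : G.Adj (φ.symm y) u := by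
        have := φ.symm.map_adj_iff.mpr hyz
        simpa using this
      have hsy : G.degree (φ.symm y) = 1 := by
        rw [iso_degree φ.symm y, hyleaf]
      have hyv : φ.symm y = v := honly _ h1.symm hsy
      apply hyw
      have : y = φ v := by
        rw [← hyv]
        exact (RelIso.apply_symm_apply φ y).symm
      rw [this, ← hw]
    -- φ.symm also fixes v
    have hvfix' : φ.symm v = v := by
      conv_lhs => rw [← hvfix]
      exact RelIso.symm_apply_apply φ v
    have hdistφ : ∀ x : V, G.dist v (φ x) = G.dist v x := by
      intro x
      conv_lhs => rw [← hvfix]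
      exact iso_dist φ hconn v x
    have hdistφ' : ∀ x : V, G.dist v (φ.symm x) = G.dist v x := by
      intro x
      conv_lhs => rw [← hvfix']
      exact iso_dist φ.symm hconn v x
    -- Step 2: induction on distance
    have main : ∀ n : ℕ, ∀ x : V, G.dist v x ≤ n → φ x = x := by
      intro n
      induction n with
      | zero =>
        intro x hx
        have hx0 : G.dist v x = 0 := Nat.le_zero.mp hx
        have : x = v := by
          by_contra hxv
          exact hdist_ne x hxv hx0
        rw [this, hvfix]
      | succ n ih =>
        intro x hx
        rcases Nat.lt_or_ge (G.dist v x) (n + 1) with hlt | hge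
        · exact ih x (Nat.lt_succ_iff.mp hlt)
        have hdx : G.dist v x = n + 1 := le_antisymm hx hge
        by_contra hne
        have hdφx : G.dist v (φ x) = n + 1 := by rw [hdistφ, hdx]
        have hcl : SameClass G v x (φ x) := by
          refine ⟨by rw [hdx, hdφx], ?_⟩
          ext z
          constructor
          · rintro ⟨hadj, hdz⟩
            have hzfix : φ z = z := ih z (by omega)
            refine ⟨?_, by rw [hdφx, ← hdx]; exact hdz⟩
            have := φ.map_adj_iff.mpr hadj
            rwa [hzfix] at this
          · rintro ⟨hadj, hdz⟩
            rw [hdφx] at hdz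
            have hzfix : φ.symm z = z := by
              have h1 : G.dist v (φ.symm z) ≤ n := by rw [hdistφ']; omega
              have := ih (φ.symm z) h1
              have h2 : φ (φ.symm z) = z := RelIso.apply_symm_apply φ z
              rw [h2] at this
              exact this.symm
            refine ⟨?_, by rw [hdx]; omega⟩
            have := φ.symm.map_adj_iff.mpr hadj
            simp only [RelIso.symm_apply_apply] at this
            rwa [hzfix] at this
        have hxv : x ≠ v := by
          intro h; rw [h, SimpleGraph.dist_self] at hdx; omega
        have hφxv : φ x ≠ v := by
          intro h; rw [h, SimpleGraph.dist_self] at hdφx; omega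
        exact col_ne hconn hmax hv hxv hφxv (fun h => hne h.symm) hcl (hφ x).symm
    intro x
    exact main (G.dist v x) x le_rfl
  exact Nat.sInf_le h2
end
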